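/- arXiv:2302.05235 — 2 statements merged into one kernel-verified Lean document; each statement's English description precedes it below -/
import Mathlib

section
/- For the 3D Lotka-Volterra system u₁' = u₁(c u₂ + u₃ + λ), u₂' = u₂(u₁ + a u₃ + μ), u₃' = u₃(b u₁ + u₂ + ν) with abc = −1 and ν = μb − λab, the quantity H₁ = ab·ln u₁ − b·ln u₂ + ln u₃ is conserved along any solution with positive components. -/
/-!
Along a positive solution `(log uᵢ)' = (r + A u)ᵢ` with `r = (λ, μ, ν)`, so `H₁' = w · (r + A u)`
for `w = (ab, -b, 1)`. Since `abc = -1`, `w` is a left null vector of the interaction matrix `A`,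
and `ν = μb - λab` says exactly that `w · r = 0`.
-/

theorem DifferentiableAt.hasDerivAt_log_of_deriv_eq_mul {f : ℝ → ℝ} {x r : ℝ}
    (hf : DifferentiableAt ℝ f x) (hrate : deriv f x = f x * r) (hx : f x ≠ 0) :
    HasDerivAt (fun y => Real.log (f y)) r x := by
  have h := hf.hasDerivAt.log hx
  rwa [hrate, mul_div_cancel_left₀ r hx] at h

theorem lotkaVolterra_rate_combination {a b c lam mu nu : ℝ} (habc : a * b * c = -1)
    (hnu : nu = mu * b - lam * a * b) (x y z : ℝ) :
    a * b * (c * y + z + lam) - b * (x + a * z + mu) + (b * x + y + nu) = 0 := by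
  subst hnu
  linear_combination y * habc

theorem stmt4 (a b c lam mu nu : ℝ) (habc : a * b * c = -1) (hnu : nu = mu * b - lam * a * b)
    (u₁ u₂ u₃ : ℝ → ℝ)
    (h₁ : Differentiable ℝ u₁) (h₂ : Differentiable ℝ u₂) (h₃ : Differentiable ℝ u₃)
    (hp₁ : ∀ t, 0 < u₁ t) (hp₂ : ∀ t, 0 < u₂ t) (hp₃ : ∀ t, 0 < u₃ t)
    (hode₁ : ∀ t, deriv u₁ t = u₁ t * (c * u₂ t + u₃ t + lam))
    (hode₂ : ∀ t, deriv u₂ t = u₂ t * (u₁ t + a * u₃ t + mu))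
    (hode₃ : ∀ t, deriv u₃ t = u₃ t * (b * u₁ t + u₂ t + nu)) :
    ∀ t, deriv (fun t => a * b * Real.log (u₁ t) - b * Real.log (u₂ t) + Real.log (u₃ t)) t
      = 0 := by
  intro t
  have hlog₁ := (h₁ t).hasDerivAt_log_of_deriv_eq_mul (hode₁ t) (hp₁ t).ne'
  have hlog₂ := (h₂ t).hasDerivAt_log_of_deriv_eq_mul (hode₂ t) (hp₂ t).ne'
  have hlog₃ := (h₃ t).hasDerivAt_log_of_deriv_eq_mul (hode₃ t) (hp₃ t).ne'
  have hH : HasDerivAt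
      (fun t => a * b * Real.log (u₁ t) - b * Real.log (u₂ t) + Real.log (u₃ t))
      (a * b * (c * u₂ t + u₃ t + lam) - b * (u₁ t + a * u₃ t + mu) + (b * u₁ t + u₂ t + nu)) t :=
    ((hlog₁.const_mul (a * b)).sub (hlog₂.const_mul b)).add hlog₃
  rw [hH.deriv]
  exact lotkaVolterra_rate_combination habc hnu (u₁ t) (u₂ t) (u₃ t)
end

section
/- For the 3D Lotka-Volterra system u₁' = u₁(c u₂ + u₃ + λ), u₂' = u₂(u₁ + a u₃ + μ), u₃' = u₃(b u₁ + u₂ + ν) with abc = −1 and ν = μb − λab, the quantity H₂ = ab·u₁ + u₂ − a·u₃ + ν·ln u₂ − μ·ln u₃ is conserved along any solution with positive components. -/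
theorem stmt5 (a b c lam mu nu : ℝ) (habc : a * b * c = -1) (hnu : nu = mu * b - lam * a * b)
    (u₁ u₂ u₃ : ℝ → ℝ)
    (h₁ : Differentiable ℝ u₁) (h₂ : Differentiable ℝ u₂) (h₃ : Differentiable ℝ u₃)
    (hp₁ : ∀ t, 0 < u₁ t) (hp₂ : ∀ t, 0 < u₂ t) (hp₃ : ∀ t, 0 < u₃ t)
    (hode₁ : ∀ t, deriv u₁ t = u₁ t * (c * u₂ t + u₃ t + lam))
    (hode₂ : ∀ t, deriv u₂ t = u₂ t * (u₁ t + a * u₃ t + mu))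
    (hode₃ : ∀ t, deriv u₃ t = u₃ t * (b * u₁ t + u₂ t + nu)) :
    ∀ t, deriv (fun t => a * b * u₁ t + u₂ t - a * u₃ t
      + nu * Real.log (u₂ t) - mu * Real.log (u₃ t)) t = 0 := by
  intro t
  have d1 := (h₁ t).hasDerivAt
  have d2 := (h₂ t).hasDerivAt
  have d3 := (h₃ t).hasDerivAt
  have hl2 : HasDerivAt (fun t => Real.log (u₂ t)) (deriv u₂ t / u₂ t) t :=
    (Real.hasDerivAt_log (hp₂ t).ne').comp t d2 |>.congr_deriv (by ring)
  have hl3 : HasDerivAt (fun t => Real.log (u₃ t)) (deriv u₃ t / u₃ t) t :=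
    (Real.hasDerivAt_log (hp₃ t).ne').comp t d3 |>.congr_deriv (by ring)
  have H : HasDerivAt (fun t => a * b * u₁ t + u₂ t - a * u₃ t
      + nu * Real.log (u₂ t) - mu * Real.log (u₃ t))
      (a * b * deriv u₁ t + deriv u₂ t - a * deriv u₃ t
      + nu * (deriv u₂ t / u₂ t) - mu * (deriv u₃ t / u₃ t)) t :=
    ((((d1.const_mul (a * b)).add d2).sub (d3.const_mul a)).add (hl2.const_mul nu)).sub
      (hl3.const_mul mu)
  rw [H.deriv, hode₁, hode₂, hode₃]
  have e2 : u₂ t ≠ 0 := (hp₂ t).ne'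
  have e3 : u₃ t ≠ 0 := (hp₃ t).ne'
  field_simp
  linear_combination u₁ t * u₂ t * habc + u₁ t * hnu
end
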